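/- arXiv:2307.12590 — 2 statements merged into one kernel-verified Lean document; each statement's English description precedes it below -/
import Mathlib

section
/- Let $\omega$ be a control function on $[0,T]$, let $N > 2p - 2$ with $N > p \ge 1$, and suppose a partition $0 = t_0 < \dots < t_n = T$ satisfies $\omega(t_k, t_{k+1}) \le \omega(0,T)/n$ for all $k$. Then the double sum $\sum_{k=1}^n \sum_{i=k}^n \left(\omega(t_{i-1},t_i)^{1/p} \sum_{j=1}^{i-1} \omega(t_{j-1},t_j)^{\frac{N+1}{p}} + \omega(t_{i-1},t_i)^{\frac{N+1}{p}}\right)\omega(t_{k-1},t_k)^{\frac{N+1}{p}}$ is bounded by $C\, n^{3 - \frac{2N+3}{p}}$ for a constant $C$ depending only on $N$, $p$, and $\omega(0,T)$; in particular this exponent satisfies $3 - \frac{2N+3}{p} < 1 - \frac{N+1}{p}$ precisely when $N > 2p-2$. -/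
/-!
Write `e = (N+1)/p`. Every increment `ω(t_{k-1}, t_k)` is at most `a = ω(0,T)/n`, and each of
the three nested sums has at most `n` terms, so the double sum is at most
`n³ a^{q₁} + n² a^{q₂}` with `q₁ = 1/p + 2e` and `q₂ = 2e`. Substituting `a` gives
`ω(0,T)^{q₁} n^{3-q₁} + ω(0,T)^{q₂} n^{2-q₂}`, and `2 - q₂ ≤ 3 - q₁` because `1/p ≤ 1`.
-/

open Finset Real

lemma exponent_gap_iff {p : ℝ} (hp : 0 < p) (N : ℝ) :
    3 - (2 * N + 3) / p < 1 - (N + 1) / p ↔ 2 * p - 2 < N := by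
  rw [← mul_lt_mul_iff_of_pos_right hp, sub_mul, sub_mul, div_mul_cancel₀ _ hp.ne',
    div_mul_cancel₀ _ hp.ne']
  constructor <;> intro h <;> linarith

lemma Finset.sum_Icc_le_mul_of_le {f : ℕ → ℝ} {c : ℝ} {a b n : ℕ} (hc : 0 ≤ c) (ha : 1 ≤ a)
    (hb : b ≤ n) (hf : ∀ i ∈ Icc a b, f i ≤ c) : ∑ i ∈ Icc a b, f i ≤ n * c := by
  calc ∑ i ∈ Icc a b, f i ≤ #(Icc a b) • c := sum_le_card_nsmul _ _ _ hf
    _ = ((b + 1 - a : ℕ) : ℝ) * c := by rw [Nat.card_Icc, nsmul_eq_mul]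
    _ ≤ n * c := by gcongr; omega

lemma double_sum_le_of_le {x : ℕ → ℝ} {a α β : ℝ} {n : ℕ} (ha : 0 ≤ a) (hα : 0 ≤ α)
    (hβ : 0 ≤ β) (hx₀ : ∀ k ∈ Icc 1 n, 0 ≤ x k) (hxa : ∀ k ∈ Icc 1 n, x k ≤ a) :
    ∑ k ∈ Icc 1 n,
        (∑ i ∈ Icc k n, (x i ^ α * ∑ j ∈ Icc 1 (i - 1), x j ^ β + x i ^ β)) * x k ^ β ≤
      n * (n * (a ^ α * (n * a ^ β) + a ^ β) * a ^ β) := by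
  have hpow {γ : ℝ} (hγ : 0 ≤ γ) {k : ℕ} (hk : k ∈ Icc 1 n) : x k ^ γ ≤ a ^ γ :=
    rpow_le_rpow (hx₀ k hk) (hxa k hk) hγ
  have hprefix {i j : ℕ} (hi : i ≤ n) (hj : j ∈ Icc 1 (i - 1)) : j ∈ Icc 1 n := by
    simp only [mem_Icc] at hj ⊢; omega
  have hterm : ∀ i ∈ Icc 1 n,
      x i ^ α * ∑ j ∈ Icc 1 (i - 1), x j ^ β + x i ^ β ≤ a ^ α * (n * a ^ β) + a ^ β := by
    intro i hi
    have hin := (mem_Icc.1 hi).2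
    gcongr ?_ * ?_ + ?_
    · exact sum_nonneg fun j hj ↦ rpow_nonneg (hx₀ j (hprefix hin hj)) _
    · exact hpow hα hi
    · exact sum_Icc_le_mul_of_le (by positivity) le_rfl (by omega) fun j hj ↦
        hpow hβ (hprefix hin hj)
    · exact hpow hβ hi
  refine sum_Icc_le_mul_of_le (by positivity) le_rfl le_rfl fun k hk ↦ ?_
  obtain ⟨hk₁, -⟩ := mem_Icc.1 hk
  refine mul_le_mul ?_ (hpow hβ hk) (rpow_nonneg (hx₀ k hk) _) (by positivity)
  exact sum_Icc_le_mul_of_le (by positivity) hk₁ le_rfl fun i hi ↦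
    hterm i (mem_Icc.2 ⟨hk₁.trans (mem_Icc.1 hi).1, (mem_Icc.1 hi).2⟩)

lemma pow_mul_div_rpow {M n : ℝ} (hM : 0 ≤ M) (hn : 0 < n) (k : ℕ) (q : ℝ) :
    n ^ k * (M / n) ^ q = M ^ q * n ^ ((k : ℝ) - q) := by
  rw [div_rpow hM hn.le, rpow_sub hn, rpow_natCast]
  ring

lemma nested_bound_le_rpow {M n α β : ℝ} (hM : 0 ≤ M) (hn : 1 ≤ n) (hα₀ : 0 ≤ α)
    (hα₁ : α ≤ 1) (hβ : 0 ≤ β) :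
    n * (n * ((M / n) ^ α * (n * (M / n) ^ β) + (M / n) ^ β) * (M / n) ^ β) ≤
      (M ^ (α + 2 * β) + M ^ (2 * β)) * n ^ (3 - (α + 2 * β)) := by
  have hn₀ : 0 < n := one_pos.trans_le hn
  have ha : 0 ≤ M / n := div_nonneg hM hn₀.le
  have hsplit₁ : (M / n) ^ (α + 2 * β) = (M / n) ^ α * (M / n) ^ β * (M / n) ^ β := by
    rw [two_mul, ← add_assoc, rpow_add_of_nonneg ha (by positivity) hβ,
      rpow_add_of_nonneg ha hα₀ hβ]
  have hsplit₂ : (M / n) ^ (2 * β) = (M / n) ^ β * (M / n) ^ β := by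
    rw [two_mul, rpow_add_of_nonneg ha hβ hβ]
  have hexp : n ^ ((2 : ℕ) - 2 * β) ≤ n ^ ((3 : ℕ) - (α + 2 * β)) :=
    rpow_le_rpow_of_exponent_le hn (by push_cast; linarith)
  calc n * (n * ((M / n) ^ α * (n * (M / n) ^ β) + (M / n) ^ β) * (M / n) ^ β)
      = n ^ 3 * (M / n) ^ (α + 2 * β) + n ^ 2 * (M / n) ^ (2 * β) := by
        rw [hsplit₁, hsplit₂]; ring
    _ = M ^ (α + 2 * β) * n ^ ((3 : ℕ) - (α + 2 * β)) +
          M ^ (2 * β) * n ^ ((2 : ℕ) - 2 * β) := by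
        rw [pow_mul_div_rpow hM hn₀, pow_mul_div_rpow hM hn₀]
    _ ≤ (M ^ (α + 2 * β) + M ^ (2 * β)) * n ^ (3 - (α + 2 * β)) := by
        have := mul_le_mul_of_nonneg_left hexp (rpow_nonneg hM (2 * β))
        push_cast at this ⊢
        linarith

theorem error_correction_double_sum_bound_general (N : ℕ) (p : ℝ) (hp : 1 ≤ p) :
    ((3 - (2 * (N : ℝ) + 3) / p < 1 - ((N : ℝ) + 1) / p) ↔ 2 * p - 2 < (N : ℝ)) ∧
    (2 * p - 2 < (N : ℝ) →
      ∃ C : ℝ → ℝ, ∀ (T : ℝ) (ω : ℝ → ℝ → ℝ),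
        (Continuous fun q : ℝ × ℝ => ω q.1 q.2) →
        (∀ s, ω s s = 0) →
        (∀ s u, 0 ≤ ω s u) →
        (∀ s t u, 0 ≤ s → s ≤ t → t ≤ u → u ≤ T → ω s t + ω t u ≤ ω s u) →
        ∀ (n : ℕ), 1 ≤ n → ∀ t : ℕ → ℝ, t 0 = 0 → t n = T →
        (∀ k, k < n → t k < t (k + 1)) →
        (∀ k, k < n → ω (t k) (t (k + 1)) ≤ ω 0 T / n) →
        ∑ k ∈ Finset.Icc 1 n,
            (∑ i ∈ Finset.Icc k n,
              (ω (t (i - 1)) (t i) ^ p⁻¹ *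
                  (∑ j ∈ Finset.Icc 1 (i - 1),
                    ω (t (j - 1)) (t j) ^ (((N : ℝ) + 1) / p)) +
                ω (t (i - 1)) (t i) ^ (((N : ℝ) + 1) / p))) *
            ω (t (k - 1)) (t k) ^ (((N : ℝ) + 1) / p) ≤
          C (ω 0 T) * (n : ℝ) ^ (3 - (2 * (N : ℝ) + 3) / p)) := by
  have hp₀ : 0 < p := one_pos.trans_le hp
  refine ⟨exponent_gap_iff hp₀ N, fun _ ↦ ?_⟩
  set e : ℝ := ((N : ℝ) + 1) / p
  have hexp : (2 * (N : ℝ) + 3) / p = p⁻¹ + 2 * e := by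
    simp only [e]; field_simp; ring
  refine ⟨fun M ↦ M ^ (p⁻¹ + 2 * e) + M ^ (2 * e), ?_⟩
  intro T ω _ _ hω₀ _ n hn t _ _ _ hstep
  have hincr : ∀ k ∈ Icc 1 n, ω (t (k - 1)) (t k) ≤ ω 0 T / n := by
    intro k hk
    obtain ⟨hk₁, hkn⟩ := mem_Icc.1 hk
    simpa [Nat.sub_add_cancel hk₁] using hstep (k - 1) (by omega)
  rw [hexp]
  exact (double_sum_le_of_le (div_nonneg (hω₀ 0 T) n.cast_nonneg) (by positivity)
    (by positivity) (fun _ _ ↦ hω₀ _ _) hincr).trans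
    (nested_bound_le_rpow (hω₀ 0 T) (by exact_mod_cast hn) (by positivity)
      (inv_le_one_of_one_le₀ hp) (by positivity))

/-- for `N > p ≥ 1`, the exponent inequality
`3 - (2N+3)/p < 1 - (N+1)/p` holds precisely when `N > 2p - 2`; and if `N > 2p-2`, then
for any control `ω` and any quasi-uniform partition (`ω(t_k,t_{k+1}) ≤ ω(0,T)/n`), the
double sum
`∑_{k=1}^n ∑_{i=k}^n (ω(t_{i-1},t_i)^{1/p} ∑_{j=1}^{i-1} ω(t_{j-1},t_j)^{(N+1)/p}
+ ω(t_{i-1},t_i)^{(N+1)/p}) ω(t_{k-1},t_k)^{(N+1)/p}`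
is bounded by `C · n^{3 - (2N+3)/p}` with `C` depending only on `N`, `p` and `ω(0,T)`. -/
theorem error_correction_double_sum_bound (N : ℕ) (p : ℝ) (hp : 1 ≤ p)
    (hpN : p < N) :
    ((3 - (2 * (N : ℝ) + 3) / p < 1 - ((N : ℝ) + 1) / p) ↔ 2 * p - 2 < (N : ℝ)) ∧
    (2 * p - 2 < (N : ℝ) →
      ∃ C : ℝ → ℝ, ∀ (T : ℝ) (ω : ℝ → ℝ → ℝ),
        (Continuous fun q : ℝ × ℝ => ω q.1 q.2) →
        (∀ s, ω s s = 0) →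
        (∀ s u, 0 ≤ ω s u) →
        (∀ s t u, 0 ≤ s → s ≤ t → t ≤ u → u ≤ T → ω s t + ω t u ≤ ω s u) →
        ∀ (n : ℕ), 1 ≤ n → ∀ t : ℕ → ℝ, t 0 = 0 → t n = T →
        (∀ k, k < n → t k < t (k + 1)) →
        (∀ k, k < n → ω (t k) (t (k + 1)) ≤ ω 0 T / n) →
        ∑ k ∈ Finset.Icc 1 n,
            (∑ i ∈ Finset.Icc k n,
              (ω (t (i - 1)) (t i) ^ p⁻¹ *
                  (∑ j ∈ Finset.Icc 1 (i - 1),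
                    ω (t (j - 1)) (t j) ^ (((N : ℝ) + 1) / p)) +
                ω (t (i - 1)) (t i) ^ (((N : ℝ) + 1) / p))) *
            ω (t (k - 1)) (t k) ^ (((N : ℝ) + 1) / p) ≤
          C (ω 0 T) * (n : ℝ) ^ (3 - (2 * (N : ℝ) + 3) / p)) :=
  error_correction_double_sum_bound_general N p hp
end

section
/- Let $0 = t_0 < \dots < t_n = T$, let $y$ solve a differential equation $dy_t = f(y_t)\,dx_t$, $y_0 = \xi$, with unique flow $y(s; t, z)$ (the solution at time $s$ started at time $t$ from $z$), and let $(\overline{y}_{t_k})_{k=0}^n$ be any sequence with $\overline{y}_{t_0} = \xi$. Define the local errors $e(t_k) = y(t_k; t_{k-1}, \overline{y}_{t_{k-1}}) - \overline{y}_{t_k}$, the value function $u(t,z) = g(y(T; t, z))$ for a $C^2$ function $g: \mathbb{R}^e \to \mathbb{R}^c$, and the first variation $\Psi(t,z) = \nabla_z u(t,z)$. Assume $u(t, \cdot)$ is continuously differentiable for each $t$. Then the global error admits the exact representation $g(y_T) - g(\overline{y}_T) = \sum_{k=1}^n \left(\int_0^1 \Psi(t_k, \overline{y}_{t_k} + s\,e(t_k))\,ds\right)\,e(t_k)$.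 -/
/-!
Write `u τ z = g (Φ T τ z)`. By the flow property, `u (t k) (Φ (t k) (t (k-1)) z) = u (t (k-1)) z`,
so the `k`-th summand, which by the fundamental theorem of calculus along the segment from
`ȳ k` to `ȳ k + e k` equals `u (t k) (ȳ k + e k) - u (t k) (ȳ k)`, is
`u (t (k-1)) (ȳ (k-1)) - u (t k) (ȳ k)`. The sum telescopes to `u (t 0) ξ - u T (ȳ n)`,
and `u T = g` since `Φ T T = id`.
-/

theorem Fin.sum_castSucc_sub_succ {M : Type*} [AddCommGroup M] (n : ℕ) (F : Fin (n + 1) → M) :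
    ∑ k : Fin n, (F k.castSucc - F k.succ) = F 0 - F (Fin.last n) := by
  induction n with
  | zero => simp
  | succ n ih =>
    rw [Fin.sum_univ_castSucc]
    simp only [Fin.succ_castSucc, ih fun k => F k.castSucc, Fin.castSucc_zero, Fin.succ_last]
    abel

theorem ContDiff.sub_eq_integral_fderiv_segment_apply {E F : Type*}
    [NormedAddCommGroup E] [NormedSpace ℝ E] [NormedAddCommGroup F] [NormedSpace ℝ F]
    [CompleteSpace F] {f : E → F} (hf : ContDiff ℝ 1 f) (a b : E) :
    f b - f a = (∫ s in (0 : ℝ)..1, fderiv ℝ f (a + s • (b - a))) (b - a) := by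
  have hsegment : ∀ s : ℝ, HasDerivAt (fun s : ℝ => a + s • (b - a)) (b - a) s := fun s => by
    simpa using ((hasDerivAt_id s).smul_const (b - a)).const_add a
  have hderiv : Continuous fun s : ℝ => fderiv ℝ f (a + s • (b - a)) :=
    (hf.continuous_fderiv one_ne_zero).comp (by fun_prop)
  rw [ContinuousLinearMap.intervalIntegral_apply (hderiv.intervalIntegrable _ _),
    intervalIntegral.integral_eq_sub_of_hasDerivAt
      (fun s _ => (hf.differentiable one_ne_zero _).hasFDerivAt.comp_hasDerivAt s (hsegment s))
      ((hderiv.clm_apply continuous_const).intervalIntegrable _ _)]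
  simp

theorem error_representation_formula_general
    (e c n : ℕ) (T : ℝ)
    (Φ : ℝ → ℝ → (Fin e → ℝ) → (Fin e → ℝ))
    (g : (Fin e → ℝ) → (Fin c → ℝ))
    (ξ : Fin e → ℝ) (t : Fin (n + 1) → ℝ)
    (htn : t (Fin.last n) = T)
    (hflow : ∀ a b z, Φ T b (Φ b a z) = Φ T a z)
    (hid : ∀ z, Φ T T z = z)
    (hu : ∀ τ : ℝ, ContDiff ℝ 1 fun z => g (Φ T τ z))
    (ybar : Fin (n + 1) → (Fin e → ℝ)) (hybar0 : ybar 0 = ξ) :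
    g (Φ T (t 0) ξ) - g (ybar (Fin.last n)) =
      ∑ k : Fin n,
        (∫ s in (0 : ℝ)..1,
            fderiv ℝ (fun z => g (Φ T (t k.succ) z))
              (ybar k.succ +
                s • (Φ (t k.succ) (t k.castSucc) (ybar k.castSucc) - ybar k.succ)))
          (Φ (t k.succ) (t k.castSucc) (ybar k.castSucc) - ybar k.succ) := by
  have hlocal : ∀ k : Fin n,
      (∫ s in (0 : ℝ)..1,
          fderiv ℝ (fun z => g (Φ T (t k.succ) z))
            (ybar k.succ +
              s • (Φ (t k.succ) (t k.castSucc) (ybar k.castSucc) - ybar k.succ)))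
        (Φ (t k.succ) (t k.castSucc) (ybar k.castSucc) - ybar k.succ) =
      g (Φ T (t k.castSucc) (ybar k.castSucc)) - g (Φ T (t k.succ) (ybar k.succ)) := fun k => by
    rw [← (hu _).sub_eq_integral_fderiv_segment_apply, hflow]
  rw [Finset.sum_congr rfl fun k _ => hlocal k,
    Fin.sum_castSucc_sub_succ n fun k => g (Φ T (t k) (ybar k)), hybar0, htn, hid]

/-- error representation formula: let `Φ s t z` denote the flow
`y(s; t, z)` of a differential equation (assumed to satisfy the flow/semigroup
property), let `g` be `C²`, let `u(t,z) = g(Φ T t z)` have continuously differentiable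
`z`-sections, let `ȳ` be any approximation on the grid `t₀ < … < t_n` with
`ȳ₀ = ξ` and local errors `e(t_k) = Φ(t_k; t_{k-1}, ȳ_{k-1}) - ȳ_k`. Then
`g(y_T) - g(ȳ_T) = ∑_k (∫₀¹ Ψ(t_k, ȳ_k + s e(t_k)) ds) e(t_k)` with
`Ψ(t,z) = ∇_z u(t,z)`. -/
theorem error_representation_formula
    (e c n : ℕ) (T : ℝ)
    (Φ : ℝ → ℝ → (Fin e → ℝ) → (Fin e → ℝ))
    (g : (Fin e → ℝ) → (Fin c → ℝ)) (hg : ContDiff ℝ 2 g)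
    (ξ : Fin e → ℝ) (t : Fin (n + 1) → ℝ)
    (ht0 : t 0 = 0) (htn : t (Fin.last n) = T) (hmono : Monotone t)
    (hflow : ∀ a b z, Φ T b (Φ b a z) = Φ T a z)
    (hid : ∀ z, Φ T T z = z)
    (hu : ∀ τ : ℝ, ContDiff ℝ 1 fun z => g (Φ T τ z))
    (ybar : Fin (n + 1) → (Fin e → ℝ)) (hybar0 : ybar 0 = ξ) :
    g (Φ T (t 0) ξ) - g (ybar (Fin.last n)) =
      ∑ k : Fin n,
        (∫ s in (0 : ℝ)..1,
            fderiv ℝ (fun z => g (Φ T (t k.succ) z))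
              (ybar k.succ +
                s • (Φ (t k.succ) (t k.castSucc) (ybar k.castSucc) - ybar k.succ)))
          (Φ (t k.succ) (t k.castSucc) (ybar k.castSucc) - ybar k.succ) :=
  error_representation_formula_general e c n T Φ g ξ t htn hflow hid hu ybar hybar0
end
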